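/- arXiv:1710.04649 — 9 statements merged into one kernel-verified Lean document; each statement's English description precedes it below -/
import Mathlib

section
/- Let d ≥ 1 and let P ⊆ ℝ^d be a closed convex cone which is pointed (P ∩ (−P) = {0}), with topological interior Ω, and let a ∈ Ω. Then the family {Ω + n•a}_{n∈ℕ} is decreasing, i.e. Ω + (n+1)•a ⊆ Ω + n•a for every n ∈ ℕ, and ⋂_{n∈ℕ} (Ω + n•a) = ∅. -/
open Set Pointwise

/-- If `P ⊆ ℝ^d` (`d ≥ 1`) is a pointed closed convex cone with interior `Ω`
and `a ∈ Ω`, then the family `{Ω + n • a}` is decreasing and has empty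
intersection. -/
theorem stmt_5 (d : ℕ) (hd : 1 ≤ d) (P : Set (Fin d → ℝ)) (hclosed : IsClosed P)
    (hadd : ∀ x ∈ P, ∀ y ∈ P, x + y ∈ P)
    (hsmul : ∀ (t : ℝ), 0 ≤ t → ∀ x ∈ P, t • x ∈ P)
    (hpointed : P ∩ (-P) = {0})
    (a : Fin d → ℝ) (ha : a ∈ interior P) :
    (∀ n : ℕ, (fun x => x + (n + 1) • a) '' interior P ⊆ (fun x => x + n • a) '' interior P) ∧
      (⋂ n : ℕ, (fun x => x + n • a) '' interior P) = ∅ := by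
  have hΩP : interior P ⊆ P := interior_subset
  -- interior P + P ⊆ interior P
  have hkey : ∀ p ∈ P, ∀ x ∈ interior P, x + p ∈ interior P := by
    intro p hp x hx
    have hopen : IsOpen {z : Fin d → ℝ | z - p ∈ interior P} :=
      isOpen_interior.preimage (continuous_id.sub continuous_const)
    have hsub : {z : Fin d → ℝ | z - p ∈ interior P} ⊆ P := by
      intro z hz
      have := hadd _ (hΩP hz) _ hp
      simpa using this
    exact interior_maximal hsub hopen (by simpa using hx)
  -- 0 is not in the interior of P
  have h0 : (0 : Fin d → ℝ) ∉ interior P := by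
    intro h0
    obtain ⟨ε, hε, hball⟩ := Metric.mem_nhds_iff.mp (isOpen_interior.mem_nhds h0)
    set e : Fin d → ℝ := Pi.single ⟨0, hd⟩ 1 with he
    have hene : e ≠ 0 := by
      intro h
      have := congrFun h ⟨0, hd⟩
      simp [he] at this
    have henorm : ‖e‖ ≤ 1 := by
      rw [pi_norm_le_iff_of_nonneg zero_le_one]
      intro i
      rcases eq_or_ne i ⟨0, hd⟩ with rfl | hne
      · simp [he]
      · simp [he, Pi.single_eq_of_ne hne]
    set v : Fin d → ℝ := (ε / 2) • e with hv
    have hvne : v ≠ 0 := smul_ne_zero (by positivity) hene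
    have hvnorm : ‖v‖ < ε := by
      rw [hv, norm_smul]
      calc ‖(ε/2 : ℝ)‖ * ‖e‖ ≤ (ε/2) * 1 := by
            apply mul_le_mul _ henorm (norm_nonneg _) (by positivity)
            rw [Real.norm_eq_abs, abs_of_pos (by positivity)]
        _ < ε := by linarith
    have hvP : v ∈ P := hΩP (hball (by simpa [Metric.mem_ball, dist_eq_norm] using hvnorm))
    have hvP' : -v ∈ P := hΩP (hball (by simpa [Metric.mem_ball, dist_eq_norm] using hvnorm))
    have : v ∈ P ∩ (-P) := ⟨hvP, by simpa using hvP'⟩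
    rw [hpointed] at this
    exact hvne this
  have hane : a ≠ 0 := fun h => h0 (h ▸ ha)
  constructor
  · intro n y hy
    obtain ⟨x, hx, rfl⟩ := hy
    exact ⟨x + a, hkey a (hΩP ha) x hx, by simp only; rw [succ_nsmul]; abel⟩
  · rw [Set.eq_empty_iff_forall_notMem]
    intro x hx
    have hmem : ∀ n : ℕ, x - n • a ∈ P := by
      intro n
      obtain ⟨y, hy, hyx⟩ := Set.mem_iInter.mp hx n
      have : x - n • a = y := by simp only at hyx; rw [← hyx]; abel
      exact this ▸ hΩP hy
    -- take limits: (1/(n+1)) • (x - (n+1)•a) = (1/(n+1))•x - a ∈ P, tends to -a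
    have hfP : ∀ n : ℕ, (1 / ((n : ℝ) + 1)) • x - a ∈ P := by
      intro n
      have h1 := hsmul (1 / ((n : ℝ) + 1)) (by positivity) _ (hmem (n + 1))
      have : (1 / ((n : ℝ) + 1)) • (x - (n + 1) • a) = (1 / ((n : ℝ) + 1)) • x - a := by
        rw [smul_sub, ← Nat.cast_smul_eq_nsmul ℝ (n + 1) a, smul_smul]
        congr 1
        rw [div_mul_eq_mul_div, one_mul]
        push_cast
        rw [div_self (by positivity)]
        simp
      rwa [this] at h1
    have hlim : Filter.Tendsto (fun n : ℕ => (1 / ((n : ℝ) + 1)) • x - a)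
        Filter.atTop (nhds (-a)) := by
      have h1 : Filter.Tendsto (fun n : ℕ => (1 / ((n : ℝ) + 1))) Filter.atTop (nhds 0) :=
        tendsto_one_div_add_atTop_nhds_zero_nat
      have h2 := (h1.smul_const x).sub_const a
      simpa using h2
    have hnegA : -a ∈ P := hclosed.mem_of_tendsto hlim (Filter.Eventually.of_forall hfP)
    have : a ∈ P ∩ (-P) := ⟨hΩP ha, by simpa using hnegA⟩
    rw [hpointed] at this
    exact hane this
end

section
/- Let d ≥ 1 and let P ⊆ ℝ^d be a closed convex cone which is pointed (P ∩ (−P) = {0}), with topological interior Ω, and let a ∈ Ω. For k ∈ ℕ set L_k := (Ω + k•a) \ (Ω + (k+1)•a). Then the sets L_k (k ∈ ℕ) are pairwise disjoint, ⋃_{k∈ℕ} L_k = Ω, and for every k ∈ ℕ one has Ω + k•a = ⋃_{m ≥ k} L_m. In particular, every x ∈ Ω lies in exactly one set L_k. -/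
/-!
Write `S n := Ω + n • a`. Since `Ω + P ⊆ Ω` and `a ∈ P`, the sets `S n` decrease, and
`L n = S n \ S (n + 1)`. Their intersection is empty: if `x - n • a ∈ P` for all `n`, then
`x / n - a ∈ P` tends to `-a`, so `-a ∈ P` by closedness and `a = 0` by pointedness; but in
dimension `d ≥ 1` a pointed cone cannot contain a neighbourhood of `0`. For any decreasing
sequence of sets with empty intersection the successive differences are disjoint and those from
index `k` on cover `S k`.
-/

open Set Pointwise Filter Topology Function

namespace Antitone

variable {α : Type*} {s : ℕ → Set α}

theorem pairwise_disjoint_sdiff_succ (hs : Antitone s) :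
    Pairwise (Disjoint on fun n => s n \ s (n + 1)) := by
  refine (pairwise_disjoint_on _).2 fun m n hmn => disjoint_left.2 ?_
  rintro x ⟨-, hxm⟩ ⟨hxn, -⟩
  exact hxm (hs hmn hxn)

theorem exists_ge_mem_sdiff_succ {x : α} {k : ℕ} (hk : x ∈ s k) (n : ℕ) (hn : x ∉ s (k + n)) :
    ∃ m, k ≤ m ∧ x ∈ s m \ s (m + 1) := by
  induction n generalizing k with
  | zero => exact absurd hk hn
  | succ n ih =>
    by_cases hk' : x ∈ s (k + 1)
    · obtain ⟨m, hkm, hm⟩ := ih hk' (by rwa [add_right_comm, add_assoc])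
      exact ⟨m, by omega, hm⟩
    · exact ⟨k, le_rfl, hk, hk'⟩

theorem biUnion_ge_sdiff_succ (hs : Antitone s) (h : ⋂ n, s n = ∅) (k : ℕ) :
    ⋃ m, ⋃ (_ : k ≤ m), s m \ s (m + 1) = s k := by
  refine Subset.antisymm (iUnion₂_subset fun m hkm => sdiff_subset.trans (hs hkm)) fun x hx => ?_
  obtain ⟨n, hn⟩ : ∃ n, x ∉ s n := by
    by_contra! hx'
    simpa [h] using mem_iInter.2 hx'
  obtain ⟨m, hkm, hm⟩ := exists_ge_mem_sdiff_succ hx n fun h' => hn (hs (by omega) h')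
  exact mem_biUnion hkm hm

theorem iUnion_sdiff_succ (hs : Antitone s) (h : ⋂ n, s n = ∅) :
    ⋃ n, s n \ s (n + 1) = s 0 := by
  simpa using hs.biUnion_ge_sdiff_succ h 0

theorem existsUnique_mem_sdiff_succ (hs : Antitone s) (h : ⋂ n, s n = ∅) {x : α} (hx : x ∈ s 0) :
    ∃! n, x ∈ s n \ s (n + 1) := by
  rw [← hs.iUnion_sdiff_succ h, mem_iUnion] at hx
  obtain ⟨n, hn⟩ := hx
  exact ⟨n, hn, fun m hm => by_contra fun hmn =>
    disjoint_left.1 (hs.pairwise_disjoint_sdiff_succ hmn) hm hn⟩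

end Antitone

namespace ConvexCone

section Translate

variable {R E : Type*} [Semiring R] [PartialOrder R] [AddCommGroup E] [SMul R E]
  [TopologicalSpace E] [IsTopologicalAddGroup E] {C : ConvexCone R E}

theorem add_mem_interior {x y : E} (hx : x ∈ interior (C : Set E)) (hy : y ∈ C) :
    x + y ∈ interior (C : Set E) := by
  refine interior_maximal ?_ ((isOpenMap_add_right y) _ isOpen_interior) ⟨x, hx, rfl⟩
  rintro _ ⟨z, hz, rfl⟩
  exact C.add_mem (interior_subset hz) hy

theorem antitone_image_add_nsmul_interior {a : E} (ha : a ∈ C) :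
    Antitone fun n : ℕ => (fun x => x + n • a) '' interior (C : Set E) := by
  refine antitone_nat_of_succ_le fun n => ?_
  rintro _ ⟨x, hx, rfl⟩
  exact ⟨x + a, add_mem_interior hx ha, by simp only [succ_nsmul]; abel⟩

end Translate

variable {E : Type*} [AddCommGroup E] [Module ℝ E] [TopologicalSpace E] [IsTopologicalAddGroup E]
  [ContinuousSMul ℝ E] {C : ConvexCone ℝ E}

theorem neg_mem_of_forall_sub_nsmul_mem (hC : IsClosed (C : Set E)) {x a : E}
    (h : ∀ n : ℕ, x - n • a ∈ C) : -a ∈ C := by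
  have hlim : Tendsto (fun n : ℕ => (n : ℝ)⁻¹ • x - a) atTop (𝓝 (-a)) := by
    simpa using ((tendsto_inv_atTop_nhds_zero_nat (𝕜 := ℝ)).smul_const x).sub_const a
  refine hC.mem_of_tendsto hlim ((eventually_ge_atTop 1).mono fun n hn => ?_)
  have hn : (0 : ℝ) < n := by exact_mod_cast hn
  show (n : ℝ)⁻¹ • x - a ∈ C
  convert C.smul_mem (inv_pos.2 hn) (h n) using 1
  rw [smul_sub, ← Nat.cast_smul_eq_nsmul ℝ, smul_smul, inv_mul_cancel₀ hn.ne', one_smul]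

theorem Salient.zero_notMem_interior [Nontrivial E] (hC : C.Salient) :
    (0 : E) ∉ interior (C : Set E) := by
  intro h0
  have hnhds : (C : Set E) ∈ 𝓝 0 := mem_interior_iff_mem_nhds.1 h0
  have hsub : (C : Set E) ∩ -C ⊆ {0} := fun x ⟨hx, hnx⟩ => by_contra fun hx0 => hC x hx hx0 hnx
  have : (0 : E) ∈ interior {0} := mem_interior_iff_mem_nhds.2 <|
    Filter.mem_of_superset (Filter.inter_mem hnhds (neg_mem_nhds_zero E hnhds)) hsub
  simp [interior_singleton] at this

theorem iInter_image_add_nsmul_interior_eq_empty [Nontrivial E] (hC : IsClosed (C : Set E))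
    (hsal : C.Salient) {a : E} (ha : a ∈ interior (C : Set E)) :
    ⋂ n : ℕ, (fun x => x + n • a) '' interior (C : Set E) = ∅ := by
  refine eq_empty_of_forall_notMem fun x hx => ?_
  have hmem : ∀ n : ℕ, x - n • a ∈ C := fun n => by
    have := mem_iInter.1 hx n
    rw [image_add_right, mem_preimage, ← sub_eq_add_neg] at this
    exact interior_subset this
  have ha0 : a = 0 := by
    by_contra ha0
    exact hsal a (interior_subset ha) ha0 (neg_mem_of_forall_sub_nsmul_mem hC hmem)
  exact hsal.zero_notMem_interior (ha0 ▸ ha)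

end ConvexCone

/-- For a pointed closed convex cone `P ⊆ ℝ^d` (`d ≥ 1`) with interior `Ω` and
`a ∈ Ω`, the sets `L k := (Ω + k•a) \ (Ω + (k+1)•a)` are pairwise disjoint,
their union is `Ω`, `Ω + k•a = ⋃_{m ≥ k} L m`, and every `x ∈ Ω` lies in
exactly one `L k`. -/
theorem stmt_6 (d : ℕ) (hd : 1 ≤ d) (P : Set (Fin d → ℝ)) (hclosed : IsClosed P)
    (hadd : ∀ x ∈ P, ∀ y ∈ P, x + y ∈ P)
    (hsmul : ∀ (t : ℝ), 0 ≤ t → ∀ x ∈ P, t • x ∈ P)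
    (hpointed : P ∩ (-P) = {0})
    (a : Fin d → ℝ) (ha : a ∈ interior P)
    (L : ℕ → Set (Fin d → ℝ))
    (hL : ∀ k : ℕ,
      L k = ((fun x => x + k • a) '' interior P) \ ((fun x => x + (k + 1) • a) '' interior P)) :
    Pairwise (Function.onFun Disjoint L) ∧
      (⋃ k : ℕ, L k) = interior P ∧
      (∀ k : ℕ, (fun x => x + k • a) '' interior P = ⋃ m : ℕ, ⋃ _ : k ≤ m, L m) ∧
      (∀ x ∈ interior P, ∃! k : ℕ, x ∈ L k) := by
  let C : ConvexCone ℝ (Fin d → ℝ) := ⟨P, fun c hc x hx => hsmul c hc.le x hx, hadd⟩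
  have hsalient : C.Salient := fun x hx hx0 hnx =>
    hx0 (hpointed.subset ⟨hx, Set.mem_neg.2 hnx⟩)
  have : Nonempty (Fin d) := ⟨⟨0, hd⟩⟩
  set S : ℕ → Set (Fin d → ℝ) := fun n => (fun x => x + n • a) '' interior P
  have hanti : Antitone S :=
    ConvexCone.antitone_image_add_nsmul_interior (C := C) (interior_subset ha)
  have hempty : ⋂ n, S n = ∅ :=
    ConvexCone.iInter_image_add_nsmul_interior_eq_empty (C := C) hclosed hsalient ha
  have hS0 : S 0 = interior P := by simp [S]
  obtain rfl : L = fun n => S n \ S (n + 1) := funext hL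
  refine ⟨hanti.pairwise_disjoint_sdiff_succ, hS0 ▸ hanti.iUnion_sdiff_succ hempty,
    fun k => (hanti.biUnion_ge_sdiff_succ hempty k).symm,
    fun x hx => hanti.existsUnique_mem_sdiff_succ hempty (hS0 ▸ hx)⟩
end

section
/- Let d ≥ 1 and let P ⊆ ℝ^d be a closed convex cone which is pointed (P ∩ (−P) = {0}), with topological interior Ω, and let a ∈ Ω. For k ∈ ℕ set L_k := (Ω + k•a) \ (Ω + (k+1)•a). Then Ω \ (P + a) is a nonempty open set (it contains a/2) contained in L_0, and consequently the Lebesgue measure λ(L_k) is strictly positive for every k ∈ ℕ. -/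
open Set Pointwise MeasureTheory Topology Filter

/-!
The point `a / 2` lies in `Ω`, and if it lay in `P + a` then `-(a / 2) ∈ P`, so pointedness would
force `a = 0`; but `0 ∉ Ω`, since otherwise the open set `Ω ∩ -Ω` would be the singleton `{0}`.
Hence `Ω \ (P + a)` is a nonempty open subset of `L 0`, and `L k` is the translate of `L 0`
by `k • a`, so every `L k` has positive Lebesgue measure.
-/

theorem zero_notMem_interior_of_inter_neg_eq_zero {E : Type*} [TopologicalSpace E] [AddGroup E]
    [ContinuousNeg E] [(𝓝[≠] (0 : E)).NeBot] {P : Set E} (hP : P ∩ -P = {0}) :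
    (0 : E) ∉ interior P := by
  intro h0
  have hsingleton : interior P ∩ -interior P = {0} :=
    subset_antisymm (hP ▸ inter_subset_inter interior_subset (neg_subset_neg.2 interior_subset))
      (by simpa using h0)
  exact not_isOpen_singleton (0 : E) (hsingleton ▸ isOpen_interior.inter isOpen_interior.neg)

theorem neg_notMem_of_inter_neg_eq_zero {E : Type*} [AddGroup E] {P : Set E}
    (hP : P ∩ -P = {0}) {x : E} (hx : x ∈ P) (hx0 : x ≠ 0) : -x ∉ P :=
  fun hnx => hx0 <| mem_singleton_iff.1 <| hP ▸ (⟨hx, hnx⟩ : x ∈ P ∩ -P)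

theorem smul_mem_interior_of_smul_mem {E : Type*} [AddCommGroup E] [Module ℝ E]
    [TopologicalSpace E] [ContinuousConstSMul ℝ E] {P : Set E}
    (hsmul : ∀ t : ℝ, 0 ≤ t → ∀ x ∈ P, t • x ∈ P) {t : ℝ} (ht : 0 < t) {x : E}
    (hx : x ∈ interior P) : t • x ∈ interior P := by
  have hsub : t • P ⊆ P := by
    rintro _ ⟨y, hy, rfl⟩
    exact hsmul t ht.le y hy
  exact interior_mono hsub (interior_smul₀ ht.ne' P ▸ smul_mem_smul_set hx)

def layer {E : Type*} [AddMonoid E] (Ω : Set E) (a : E) (k : ℕ) : Set E :=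
  ((fun x => x + k • a) '' Ω) \ ((fun x => x + (k + 1) • a) '' Ω)

section Layer

variable {E : Type*} [AddCommGroup E] (Ω : Set E) (a : E)

theorem layer_zero : layer Ω a 0 = Ω \ (fun x => x + a) '' Ω := by
  simp [layer]

theorem layer_eq_image_layer_zero (k : ℕ) :
    layer Ω a k = (fun x => x + k • a) '' layer Ω a 0 := by
  rw [layer, layer, image_sdiff (add_left_injective _), image_image, image_image]
  simp only [zero_smul, add_zero, zero_add, one_smul, succ_nsmul, add_comm a, add_assoc]

theorem measure_layer [MeasurableSpace E] [MeasurableAdd E] (μ : Measure E)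
    [μ.IsAddRightInvariant] (k : ℕ) : μ (layer Ω a k) = μ (layer Ω a 0) := by
  rw [layer_eq_image_layer_zero, image_add_right, measure_preimage_add_right]

end Layer

theorem stmt_8_general (d : ℕ) (hd : 1 ≤ d) (P : Set (Fin d → ℝ)) (hclosed : IsClosed P)
    (hsmul : ∀ (t : ℝ), 0 ≤ t → ∀ x ∈ P, t • x ∈ P)
    (hpointed : P ∩ (-P) = {0})
    (a : Fin d → ℝ) (ha : a ∈ interior P)
    (L : ℕ → Set (Fin d → ℝ))
    (hL : ∀ k : ℕ,
      L k = ((fun x => x + k • a) '' interior P) \ ((fun x => x + (k + 1) • a) '' interior P)) :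
    IsOpen (interior P \ ((fun x => x + a) '' P)) ∧
      ((1 / 2 : ℝ) • a) ∈ interior P \ ((fun x => x + a) '' P) ∧
      interior P \ ((fun x => x + a) '' P) ⊆ L 0 ∧
      (∀ k : ℕ, 0 < volume (L k)) := by
  obtain rfl : L = layer (interior P) a := funext hL
  have : Nonempty (Fin d) := ⟨⟨0, hd⟩⟩
  have hopen : IsOpen (interior P \ (fun x => x + a) '' P) :=
    isOpen_interior.sdiff ((Homeomorph.addRight a).isClosedMap _ hclosed)
  have ha0 : a ≠ 0 := ne_of_mem_of_not_mem ha (zero_notMem_interior_of_inter_neg_eq_zero hpointed)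
  have hhalf : (1 / 2 : ℝ) • a ∈ interior P := smul_mem_interior_of_smul_mem hsmul (by norm_num) ha
  have hhalf_notMem : (1 / 2 : ℝ) • a ∉ (fun x => x + a) '' P := by
    rw [image_add_right, mem_preimage, show (1 / 2 : ℝ) • a + -a = -((1 / 2 : ℝ) • a) by module]
    exact neg_notMem_of_inter_neg_eq_zero hpointed (interior_subset hhalf)
      (smul_ne_zero (by norm_num) ha0)
  have hsub : interior P \ (fun x => x + a) '' P ⊆ layer (interior P) a 0 := by
    rw [layer_zero]
    exact sdiff_subset_sdiff_right (image_mono interior_subset)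
  refine ⟨hopen, ⟨hhalf, hhalf_notMem⟩, hsub, fun k => ?_⟩
  rw [measure_layer]
  exact (hopen.measure_pos volume ⟨_, hhalf, hhalf_notMem⟩).trans_le (measure_mono hsub)

/-- For a pointed closed convex cone `P ⊆ ℝ^d` (`d ≥ 1`) with interior `Ω` and
`a ∈ Ω`, the set `Ω \ (P + a)` is open, contains `a/2` (hence is nonempty), is
contained in `L 0`, and every `L k` has strictly positive Lebesgue measure. -/
theorem stmt_8 (d : ℕ) (hd : 1 ≤ d) (P : Set (Fin d → ℝ)) (hclosed : IsClosed P)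
    (hadd : ∀ x ∈ P, ∀ y ∈ P, x + y ∈ P)
    (hsmul : ∀ (t : ℝ), 0 ≤ t → ∀ x ∈ P, t • x ∈ P)
    (hpointed : P ∩ (-P) = {0})
    (a : Fin d → ℝ) (ha : a ∈ interior P)
    (L : ℕ → Set (Fin d → ℝ))
    (hL : ∀ k : ℕ,
      L k = ((fun x => x + k • a) '' interior P) \ ((fun x => x + (k + 1) • a) '' interior P)) :
    IsOpen (interior P \ ((fun x => x + a) '' P)) ∧
      ((1 / 2 : ℝ) • a) ∈ interior P \ ((fun x => x + a) '' P) ∧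
      interior P \ ((fun x => x + a) '' P) ⊆ L 0 ∧
      (∀ k : ℕ, 0 < volume (L k)) :=
  stmt_8_general d hd P hclosed hsmul hpointed a ha L hL
end

section
/- Let d ≥ 1 and let P ⊆ ℝ^d be a closed convex cone which is pointed (P ∩ (−P) = {0}), with topological interior Ω, and let a ∈ Ω. For k ∈ ℕ set L_k := (Ω + k•a) \ (Ω + (k+1)•a), and for x ∈ Ω let n(x) denote the unique k ∈ ℕ with x ∈ L_k. Fix k ∈ ℕ and z ∈ ℝ^d, set L_z := (L_0 + z) ∩ Ω and A := L_z ∩ (Ω + k•a). Then the map χ : A → ℝ^d defined by χ(x) = x − n(x)•a + k•a takes values in L_k, is injective, and satisfies λ(χ(C)) = λ(C) for every Borel set C ⊆ A, where λ is Lebesgue measure on ℝ^d. -/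
open Set Pointwise MeasureTheory

/-- For a pointed closed convex cone `P ⊆ ℝ^d` (`d ≥ 1`) with interior `Ω`,
`a ∈ Ω`, `L k := (Ω + k•a) \ (Ω + (k+1)•a)` and `n x` the unique `k` with
`x ∈ L k`: for `k ∈ ℕ`, `z ∈ ℝ^d`, `L_z := (L 0 + z) ∩ Ω` and
`A := L_z ∩ (Ω + k•a)`, the map `χ(x) = x - n(x)•a + k•a` maps `A` into `L k`,
is injective on `A`, and preserves Lebesgue measure of Borel subsets of `A`. -/
theorem stmt_9 (d : ℕ) (hd : 1 ≤ d) (P : Set (Fin d → ℝ)) (hclosed : IsClosed P)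
    (hadd : ∀ x ∈ P, ∀ y ∈ P, x + y ∈ P)
    (hsmul : ∀ (t : ℝ), 0 ≤ t → ∀ x ∈ P, t • x ∈ P)
    (hpointed : P ∩ (-P) = {0})
    (a : Fin d → ℝ) (ha : a ∈ interior P)
    (L : ℕ → Set (Fin d → ℝ))
    (hL : ∀ k : ℕ,
      L k = ((fun x => x + k • a) '' interior P) \ ((fun x => x + (k + 1) • a) '' interior P))
    (n : (Fin d → ℝ) → ℕ) (hn : ∀ x ∈ interior P, x ∈ L (n x))
    (k : ℕ) (z : Fin d → ℝ)
    (A : Set (Fin d → ℝ))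
    (hA : A = (((fun x => x + z) '' L 0) ∩ interior P) ∩ ((fun x => x + k • a) '' interior P)) :
    (∀ x ∈ A, x - n x • a + k • a ∈ L k) ∧
      Set.InjOn (fun x => x - n x • a + k • a) A ∧
      (∀ C : Set (Fin d → ℝ), C ⊆ A → MeasurableSet C →
        volume ((fun x => x - n x • a + k • a) '' C) = volume C) := by
  -- basic facts
  have hΩadd : ∀ x ∈ interior P, ∀ p ∈ P, x + p ∈ interior P := by
    intro x hx p hp
    rw [mem_interior] at hx ⊢
    obtain ⟨U, hUP, hUo, hxU⟩ := hx
    refine ⟨(fun y => y - p) ⁻¹' U, ?_, hUo.preimage (continuous_id.sub continuous_const), by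
      simpa using hxU⟩
    intro y hy
    have h1 : y - p ∈ P := hUP hy
    have := hadd _ h1 p hp
    simpa using this
  have hma : ∀ m : ℕ, m • a ∈ P := by
    intro m
    have := hsmul (m : ℝ) (by positivity) a (interior_subset ha)
    rwa [Nat.cast_smul_eq_nsmul] at this
  have hsub : ∀ {j m : ℕ}, j ≤ m →
      ((fun x => x + m • a) '' interior P) ⊆ ((fun x => x + j • a) '' interior P) := by
    rintro j m hjm _ ⟨x, hx, rfl⟩
    refine ⟨x + (m - j) • a, hΩadd x hx _ (hma _), ?_⟩
    simp only
    rw [add_assoc, ← add_nsmul, Nat.sub_add_cancel hjm]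
  have hLuniq : ∀ j m x, x ∈ L j → x ∈ L m → j = m := by
    have key : ∀ j m x, j < m → x ∈ L j → x ∈ L m → False := by
      intro j m x hjm hj hm
      rw [hL] at hj hm
      exact hj.2 (hsub (show j + 1 ≤ m from hjm) hm.1)
    intro j m x hj hm
    rcases lt_trichotomy j m with h | h | h
    · exact absurd (key j m x h hj hm) (by simp)
    · exact h
    · exact absurd (key m j x h hm hj) (by simp)
  have hLsubΩ : ∀ j, L j ⊆ interior P := by
    intro j x hx
    rw [hL] at hx
    obtain ⟨⟨y, hy, rfl⟩, -⟩ := hx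
    exact hΩadd y hy _ (hma j)
  have hnL : ∀ j, ∀ x ∈ L j, n x = j := fun j x hx =>
    hLuniq _ _ _ (hn x (hLsubΩ j hx)) hx
  have hAΩ : A ⊆ interior P := by
    rw [hA]; intro x hx; exact hx.1.2
  -- part 1
  have part1 : ∀ x ∈ interior P, x - n x • a + k • a ∈ L k := by
    intro x hx
    have hxL := hn x hx
    rw [hL] at hxL ⊢
    obtain ⟨⟨y, hy, hyx⟩, hxnot⟩ := hxL
    simp only at hyx
    constructor
    · refine ⟨y, hy, ?_⟩
      simp only
      calc y + k • a = (y + n x • a) - n x • a + k • a := by abel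
        _ = x - n x • a + k • a := by rw [hyx]
    · rintro ⟨w, hw, hw2⟩
      simp only at hw2
      apply hxnot
      refine ⟨w, hw, ?_⟩
      simp only
      have h0 := hw2
      rw [succ_nsmul] at h0
      have h : w + a = x - n x • a := by
        calc w + a = (w + (k • a + a)) - k • a := by abel
          _ = (x - n x • a + k • a) - k • a := by rw [h0]
          _ = x - n x • a := by abel
      calc w + (n x + 1) • a = (w + a) + n x • a := by rw [succ_nsmul]; abel
        _ = (x - n x • a) + n x • a := by rw [h]
        _ = x := by abel
  -- part 2
  have key : ∀ x y : Fin d → ℝ, x ∈ A → y ∈ A →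
      x - n x • a = y - n y • a → n x ≤ n y → x = y := by
    intro x y hx hy hb hle
    rcases eq_or_lt_of_le hle with heq | hlt
    · rw [heq] at hb
      exact sub_left_injective hb
    · exfalso
      rw [hA] at hx hy
      obtain ⟨⟨⟨u, hu0, huz⟩, hxΩ⟩, -⟩ := hx
      obtain ⟨⟨⟨v, hv0, hvz⟩, hyΩ⟩, -⟩ := hy
      simp only at huz hvz
      set m := n y - n x with hm
      have hm1 : 1 ≤ m := by omega
      have hy_eq : y = x + m • a := by
        have h1 : (n y) • a = m • a + (n x) • a := by
          rw [← add_nsmul]; congr 1; omega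
        have h2 : y = x - n x • a + n y • a := by
          rw [hb]; abel
        rw [h2, h1]; abel
      have hv_eq : (u + (m - 1) • a) + (0 + 1) • a = v := by
        have h1 : v = y - z := by rw [← hvz]; abel
        have h2 : u = x - z := by rw [← huz]; abel
        have h3 : m • a = (m - 1) • a + (0 + 1) • a := by
          rw [← add_nsmul]; congr 1; omega
        rw [h1, h2, hy_eq, h3]; abel
      rw [hL] at hv0
      exact hv0.2 ⟨u + (m - 1) • a, hΩadd u (hLsubΩ 0 hu0) _ (hma _), hv_eq⟩
  have part2 : Set.InjOn (fun x => x - n x • a + k • a) A := by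
    intro x hx y hy hxy
    simp only at hxy
    have hb : x - n x • a = y - n y • a := by
      have := hxy
      exact add_right_cancel this
    rcases le_total (n x) (n y) with h | h
    · exact key x y hx hy hb h
    · exact (key y x hy hx hb.symm h).symm
  refine ⟨fun x hx => part1 x (hAΩ hx), part2, ?_⟩
  -- part 3
  intro C hCA hCmeas
  have hLmeas : ∀ j, MeasurableSet (L j) := by
    intro j
    rw [hL]
    exact ((isOpenMap_add_right _ _ isOpen_interior).measurableSet).diff
      ((isOpenMap_add_right _ _ isOpen_interior).measurableSet)
  have decomp : C = ⋃ j, C ∩ L j := by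
    ext x
    simp only [mem_iUnion, mem_inter_iff]
    constructor
    · intro hx; exact ⟨n x, hx, hn x (hAΩ (hCA hx))⟩
    · rintro ⟨j, hx, -⟩; exact hx
  have himg : (fun x => x - n x • a + k • a) '' C
      = ⋃ j, (fun x => x + (k • a - j • a)) '' (C ∩ L j) := by
    conv_lhs => rw [decomp, image_iUnion]
    refine iUnion_congr fun j => ?_
    refine image_congr fun x hx => ?_
    rw [hnL j x hx.2]
    abel
  rw [himg]
  have hmeas : ∀ j, MeasurableSet ((fun x => x + (k • a - j • a)) '' (C ∩ L j)) := by
    intro j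
    rw [Set.image_add_right]
    exact (hCmeas.inter (hLmeas j)).preimage (measurable_id.add_const _)
  have hdisj : Pairwise (Function.onFun Disjoint
      fun j => (fun x => x + (k • a - j • a)) '' (C ∩ L j)) := by
    intro i j hij
    rw [Function.onFun, disjoint_left]
    rintro t ⟨x, hx, rfl⟩ ⟨y, hy, hxy⟩
    simp only at hxy
    have hchix : x + (k • a - i • a) = x - n x • a + k • a := by
      rw [hnL i x hx.2]; abel
    have hchiy : y + (k • a - j • a) = y - n y • a + k • a := by
      rw [hnL j y hy.2]; abel
    have : (fun x => x - n x • a + k • a) x = (fun x => x - n x • a + k • a) y := by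
      simp only
      rw [← hchix, ← hchiy, hxy]
    have hxey : x = y := part2 (hCA hx.1) (hCA hy.1) this
    rw [hxey] at hx
    exact hij (hLuniq i j y hx.2 hy.2)
  rw [measure_iUnion hdisj hmeas]
  have hvol : ∀ j, volume ((fun x => x + (k • a - j • a)) '' (C ∩ L j)) = volume (C ∩ L j) := by
    intro j
    rw [Set.image_add_right]
    exact measure_preimage_add_right volume _ _
  simp_rw [hvol]
  have hdisj2 : Pairwise (Function.onFun Disjoint fun j => C ∩ L j) := by
    intro i j hij
    rw [Function.onFun, disjoint_left]
    rintro x ⟨-, hxi⟩ ⟨-, hxj⟩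
    exact hij (hLuniq i j x hxi hxj)
  rw [← measure_iUnion hdisj2 (fun j => hCmeas.inter (hLmeas j)), ← decomp]
end

section
/- Let d ≥ 1 and let P ⊆ ℝ^d be a closed convex cone which is pointed (P ∩ (−P) = {0}), with topological interior Ω, and let a ∈ Ω. Fix k ∈ ℕ and b ∈ Ω with b − k•a ∈ Ω. Set L_k := (Ω + k•a) \ (Ω + (k+1)•a) and L_b := (Ω + b) \ (Ω + a + b). For x ∈ L_k, the set {m ∈ ℕ : x + m•a ∈ Ω + b} is nonempty; let m(x) be its least element. Then x + m(x)•a ∈ L_b for every x ∈ L_k. -/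
open Set Pointwise

/-- For a pointed closed convex cone `P ⊆ ℝ^d` (`d ≥ 1`) with interior `Ω`,
`a ∈ Ω`, `k ∈ ℕ` and `b ∈ Ω` with `b - k•a ∈ Ω`: for every `x` in
`L_k := (Ω + k•a) \ (Ω + (k+1)•a)` the set `{m : ℕ | x + m•a ∈ Ω + b}` is
nonempty, and its least element `m(x)` satisfies
`x + m(x)•a ∈ L_b := (Ω + b) \ (Ω + a + b)`. -/
theorem stmt_10 (d : ℕ) (hd : 1 ≤ d) (P : Set (Fin d → ℝ)) (hclosed : IsClosed P)
    (hadd : ∀ x ∈ P, ∀ y ∈ P, x + y ∈ P)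
    (hsmul : ∀ (t : ℝ), 0 ≤ t → ∀ x ∈ P, t • x ∈ P)
    (hpointed : P ∩ (-P) = {0})
    (a : Fin d → ℝ) (ha : a ∈ interior P)
    (k : ℕ) (b : Fin d → ℝ) (hb : b ∈ interior P) (hbk : b - k • a ∈ interior P)
    (Lk Lb : Set (Fin d → ℝ))
    (hLk : Lk = ((fun x => x + k • a) '' interior P) \ ((fun x => x + (k + 1) • a) '' interior P))
    (hLb : Lb = ((fun x => x + b) '' interior P) \ ((fun x => x + (a + b)) '' interior P)) :
    ∀ x ∈ Lk,
      {m : ℕ | x + m • a ∈ (fun y => y + b) '' interior P}.Nonempty ∧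
      (∀ m : ℕ, IsLeast {j : ℕ | x + j • a ∈ (fun y => y + b) '' interior P} m →
        x + m • a ∈ Lb) := by
  have hΩ : IsOpen (interior P) := isOpen_interior
  -- interior P + P ⊆ interior P
  have hadd' : ∀ y ∈ P, ∀ x ∈ interior P, x + y ∈ interior P := by
    intro y hy x hx
    have himg : (fun z => z + y) '' interior P ⊆ P := by
      rintro _ ⟨z, hz, rfl⟩
      exact hadd z (interior_subset hz) y hy
    have hopen : IsOpen ((fun z => z + y) '' interior P) :=
      (isOpenMap_add_right y) _ hΩ
    exact interior_maximal himg hopen ⟨x, hx, rfl⟩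
  -- positive scaling preserves interior P
  have hsmul' : ∀ t : ℝ, 0 < t → ∀ x ∈ interior P, t • x ∈ interior P := by
    intro t ht x hx
    have himg : (fun z => t • z) '' interior P ⊆ P := by
      rintro _ ⟨z, hz, rfl⟩
      exact hsmul t ht.le z (interior_subset hz)
    have hopen : IsOpen ((fun z => t • z) '' interior P) :=
      (isOpenMap_smul₀ ht.ne') _ hΩ
    exact interior_maximal himg hopen ⟨x, hx, rfl⟩
  -- any vector can be pushed into the interior by a large multiple of a
  have hA : ∀ w : Fin d → ℝ, ∃ m : ℕ, w + m • a ∈ interior P := by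
    intro w
    obtain ⟨ε, hε, hball⟩ := Metric.isOpen_iff.mp hΩ a ha
    obtain ⟨m, hm⟩ := exists_nat_gt (‖w‖ / ε)
    have hm0 : 0 < (m : ℝ) := lt_of_le_of_lt (div_nonneg (norm_nonneg w) hε.le) hm
    have hmem : a + (m : ℝ)⁻¹ • w ∈ Metric.ball a ε := by
      rw [Metric.mem_ball, dist_eq_norm]
      have h1 : a + (m : ℝ)⁻¹ • w - a = (m : ℝ)⁻¹ • w := by abel
      rw [h1, norm_smul, norm_inv, Real.norm_natCast]
      rw [inv_mul_lt_iff₀ hm0]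
      calc ‖w‖ = (‖w‖ / ε) * ε := by field_simp
        _ < (m : ℝ) * ε := by exact mul_lt_mul_of_pos_right hm hε
    refine ⟨m, ?_⟩
    have hsc := hsmul' (m : ℝ) hm0 _ (hball hmem)
    have heq : (m : ℝ) • (a + (m : ℝ)⁻¹ • w) = w + m • a := by
      rw [smul_add, smul_inv_smul₀ hm0.ne', Nat.cast_smul_eq_nsmul ℝ, add_comm]
    rwa [heq] at hsc
  intro x hx
  rw [hLk] at hx
  obtain ⟨hx1, hx2⟩ := hx
  constructor
  · obtain ⟨m, hm⟩ := hA (x - b)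
    exact ⟨m, x - b + m • a, hm, by simp; abel⟩
  · rintro m ⟨hmS, hlb⟩
    rw [hLb]
    refine ⟨hmS, ?_⟩
    rintro ⟨ω, hω, hωeq⟩
    simp only at hωeq
    cases m with
    | zero =>
      apply hx2
      refine ⟨ω + (b - k • a), hadd' _ (interior_subset hbk) ω hω, ?_⟩
      have hxeq : x = ω + (a + b) := by simpa using hωeq.symm
      simp only [hxeq]
      rw [succ_nsmul]
      abel
    | succ n =>
      have hn : n ∉ {j : ℕ | x + j • a ∈ (fun y => y + b) '' interior P} := by
        intro hnS
        exact absurd (hlb hnS) (by omega)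
      apply hn
      refine ⟨ω, hω, ?_⟩
      simp only
      rw [succ_nsmul] at hωeq
      have : ω + b + a = x + n • a + a := by
        calc ω + b + a = ω + (a + b) := by abel
          _ = x + (n • a + a) := hωeq
          _ = x + n • a + a := by abel
      exact add_right_cancel this
end

section
/- Let d ≥ 1 and let P ⊆ ℝ^d be a closed convex cone which is pointed (P ∩ (−P) = {0}), with topological interior Ω, and let a ∈ Ω. Fix k ∈ ℕ and b ∈ Ω with b − k•a ∈ Ω. Set L_k := (Ω + k•a) \ (Ω + (k+1)•a) and L_b := (Ω + b) \ (Ω + a + b). Then for every x ∈ L_k there exists a unique m ∈ ℕ such that x + m•a ∈ L_b. -/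
open Set Pointwise

/-! With `Ω = interior P`, put `p n :⇔ x + n • a - (a + b) ∈ Ω`; then `x + m • a ∈ L_b` says exactly
`p (m + 1) ∧ ¬ p m`. Since `Ω + P ⊆ Ω`, `p` is monotone; it holds eventually because the interior
point `a` absorbs every vector; and `p 0` fails, since `x - (a + b) ∈ Ω` would give
`x - (k + 1) • a = (x - (a + b)) + (b - k • a) ∈ Ω`, contradicting `x ∈ L_k`. Hence `m + 1` must be
the first index at which `p` holds. -/

theorem Nat.existsUnique_succ_and_not_of_monotone {p : ℕ → Prop} (hp : Monotone p) (h0 : ¬ p 0)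
    (h : ∃ n, p n) : ∃! m, p (m + 1) ∧ ¬ p m := by
  classical
  obtain ⟨m, hm⟩ := Nat.exists_eq_add_one_of_ne_zero (fun hz => h0 (hz ▸ Nat.find_spec h))
  refine ⟨m, ⟨hm ▸ Nat.find_spec h, Nat.find_min h (by omega)⟩, ?_⟩
  rintro m' ⟨hm'1, hm'0⟩
  by_contra hne
  rcases Nat.lt_or_gt_of_ne hne with hlt | hlt
  · exact Nat.find_min h (show m' + 1 < Nat.find h by omega) hm'1
  · exact hm'0 (hp (show m + 1 ≤ m' by omega) (hm ▸ Nat.find_spec h))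

theorem mem_image_add_right_iff {G : Type*} [AddGroup G] {S : Set G} {v y : G} :
    y ∈ (fun x => x + v) '' S ↔ y - v ∈ S := by
  simp [image_add_right, sub_eq_add_neg]

section Cone

variable {E : Type*} [AddCommGroup E] [TopologicalSpace E] {P : Set E}

theorem add_mem_interior_of_mem_interior_of_mem [IsTopologicalAddGroup E]
    (hadd : ∀ x ∈ P, ∀ y ∈ P, x + y ∈ P) {x p : E} (hx : x ∈ interior P) (hp : p ∈ P) :
    x + p ∈ interior P :=
  interior_maximal (by rintro _ ⟨z, hz, rfl⟩; exact hadd z (interior_subset hz) p hp)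
    (isOpenMap_add_right p _ isOpen_interior) ⟨x, hx, rfl⟩

open Filter Topology in
theorem exists_nsmul_sub_mem_of_mem_interior [Module ℝ E] [IsTopologicalAddGroup E]
    [ContinuousSMul ℝ E] (hsmul : ∀ t : ℝ, 0 ≤ t → ∀ x ∈ P, t • x ∈ P) {a : E}
    (ha : a ∈ interior P) (v : E) : ∃ N : ℕ, N • a - v ∈ P := by
  have hlim : Tendsto (fun n : ℕ => a - (n : ℝ)⁻¹ • v) atTop (𝓝 a) := by
    simpa using (tendsto_inv_atTop_nhds_zero_nat (𝕜 := ℝ)).smul_const v |>.const_sub a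
  obtain ⟨N, hNP, hN1⟩ :=
    ((hlim.eventually (isOpen_interior.mem_nhds ha)).and (eventually_ge_atTop 1)).exists
  refine ⟨N, ?_⟩
  have hN0 : (N : ℝ) ≠ 0 := Nat.cast_ne_zero.mpr (by omega)
  have := hsmul N N.cast_nonneg _ (interior_subset hNP)
  rwa [smul_sub, smul_smul, mul_inv_cancel₀ hN0, one_smul, Nat.cast_smul_eq_nsmul] at this

end Cone

theorem stmt_11_general (d : ℕ) (P : Set (Fin d → ℝ))
    (hadd : ∀ x ∈ P, ∀ y ∈ P, x + y ∈ P)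
    (hsmul : ∀ (t : ℝ), 0 ≤ t → ∀ x ∈ P, t • x ∈ P)
    (a : Fin d → ℝ) (ha : a ∈ interior P)
    (k : ℕ) (b : Fin d → ℝ) (hbk : b - k • a ∈ interior P)
    (Lk Lb : Set (Fin d → ℝ))
    (hLk : Lk = ((fun x => x + k • a) '' interior P) \ ((fun x => x + (k + 1) • a) '' interior P))
    (hLb : Lb = ((fun x => x + b) '' interior P) \ ((fun x => x + (a + b)) '' interior P)) :
    ∀ x ∈ Lk, ∃! m : ℕ, x + m • a ∈ Lb := by
  intro x hx
  rw [hLk, mem_sdiff, mem_image_add_right_iff, mem_image_add_right_iff] at hx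
  obtain ⟨hxk, hxk1⟩ := hx
  set p : ℕ → Prop := fun n => x + n • a - (a + b) ∈ interior P
  have hLb_iff (m : ℕ) : x + m • a ∈ Lb ↔ p (m + 1) ∧ ¬ p m := by
    rw [hLb, mem_sdiff, mem_image_add_right_iff, mem_image_add_right_iff,
      show x + m • a - b = x + (m + 1) • a - (a + b) by module]
  have hp0 : ¬ p 0 := fun h0 => hxk1 <| by
    convert add_mem_interior_of_mem_interior_of_mem hadd h0 (interior_subset hbk) using 1
    module
  have hmono : Monotone p := monotone_nat_of_le_succ fun n hn => by
    convert add_mem_interior_of_mem_interior_of_mem hadd hn (interior_subset ha) using 1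
    module
  have hex : ∃ n, p n := by
    obtain ⟨N, hN⟩ := exists_nsmul_sub_mem_of_mem_interior hsmul ha (a + b - k • a)
    refine ⟨N, ?_⟩
    convert add_mem_interior_of_mem_interior_of_mem hadd hxk hN using 1
    module
  simpa only [hLb_iff] using Nat.existsUnique_succ_and_not_of_monotone hmono hp0 hex

/-- For a pointed closed convex cone `P ⊆ ℝ^d` (`d ≥ 1`) with interior `Ω`,
`a ∈ Ω`, `k ∈ ℕ` and `b ∈ Ω` with `b - k•a ∈ Ω`: for every `x` in
`L_k := (Ω + k•a) \ (Ω + (k+1)•a)` there is a unique `m ∈ ℕ` with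
`x + m•a ∈ L_b := (Ω + b) \ (Ω + a + b)`. -/
theorem stmt_11 (d : ℕ) (hd : 1 ≤ d) (P : Set (Fin d → ℝ)) (hclosed : IsClosed P)
    (hadd : ∀ x ∈ P, ∀ y ∈ P, x + y ∈ P)
    (hsmul : ∀ (t : ℝ), 0 ≤ t → ∀ x ∈ P, t • x ∈ P)
    (hpointed : P ∩ (-P) = {0})
    (a : Fin d → ℝ) (ha : a ∈ interior P)
    (k : ℕ) (b : Fin d → ℝ) (hb : b ∈ interior P) (hbk : b - k • a ∈ interior P)
    (Lk Lb : Set (Fin d → ℝ))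
    (hLk : Lk = ((fun x => x + k • a) '' interior P) \ ((fun x => x + (k + 1) • a) '' interior P))
    (hLb : Lb = ((fun x => x + b) '' interior P) \ ((fun x => x + (a + b)) '' interior P)) :
    ∀ x ∈ Lk, ∃! m : ℕ, x + m • a ∈ Lb :=
  stmt_11_general d P hadd hsmul a ha k b hbk Lk Lb hLk hLb
end

section
/- Let d ≥ 1 and let P ⊆ ℝ^d be a closed convex cone which is pointed (P ∩ (−P) = {0}), with topological interior Ω, and let a ∈ Ω. Fix k ∈ ℕ and b ∈ Ω with b − k•a ∈ Ω. Set L_k := (Ω + k•a) \ (Ω + (k+1)•a) and L_b := (Ω + b) \ (Ω + a + b). Then for every y ∈ L_b there exist x ∈ L_k and m ∈ ℕ with y = x + m•a; in particular, the map χ : L_k → L_b, χ(x) = x + m(x)•a, where m(x) is the least m ∈ ℕ with x + m•a ∈ Ω + b, is surjective onto L_b. -/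
open Set Pointwise

/-- For a pointed closed convex cone `P ⊆ ℝ^d` (`d ≥ 1`) with interior `Ω`,
`a ∈ Ω`, `k ∈ ℕ` and `b ∈ Ω` with `b - k•a ∈ Ω`: every `y` in
`L_b := (Ω + b) \ (Ω + a + b)` is of the form `x + j•a` with `x ∈ L_k` and
`j ∈ ℕ`; in particular `χ(x) = x + m(x)•a` maps `L_k` onto `L_b`, where `m x`
is the least `m ∈ ℕ` with `x + m•a ∈ Ω + b`. -/
theorem stmt_13 (d : ℕ) (hd : 1 ≤ d) (P : Set (Fin d → ℝ)) (hclosed : IsClosed P)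
    (hadd : ∀ x ∈ P, ∀ y ∈ P, x + y ∈ P)
    (hsmul : ∀ (t : ℝ), 0 ≤ t → ∀ x ∈ P, t • x ∈ P)
    (hpointed : P ∩ (-P) = {0})
    (a : Fin d → ℝ) (ha : a ∈ interior P)
    (k : ℕ) (b : Fin d → ℝ) (hb : b ∈ interior P) (hbk : b - k • a ∈ interior P)
    (Lk Lb : Set (Fin d → ℝ))
    (hLk : Lk = ((fun x => x + k • a) '' interior P) \ ((fun x => x + (k + 1) • a) '' interior P))
    (hLb : Lb = ((fun x => x + b) '' interior P) \ ((fun x => x + (a + b)) '' interior P))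
    (m : (Fin d → ℝ) → ℕ)
    (hm : ∀ x ∈ Lk, IsLeast {j : ℕ | x + j • a ∈ (fun y => y + b) '' interior P} (m x)) :
    ∀ y ∈ Lb, (∃ x ∈ Lk, ∃ j : ℕ, y = x + j • a) ∧ (∃ x ∈ Lk, y = x + m x • a) := by
  have hPsub : interior P ⊆ P := interior_subset
  have haP : a ∈ P := hPsub ha
  -- interior + P ⊆ interior
  have hIadd : ∀ u ∈ interior P, ∀ p ∈ P, u + p ∈ interior P := by
    intro u hu p hp
    rw [mem_interior_iff_mem_nhds, Metric.mem_nhds_iff] at hu ⊢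
    obtain ⟨ε, hε, hball⟩ := hu
    refine ⟨ε, hε, fun w hw => ?_⟩
    have h1 : w - p ∈ Metric.ball u ε := by
      rw [Metric.mem_ball, dist_eq_norm] at hw ⊢
      have : w - p - u = w - (u + p) := by abel
      rw [this]; exact hw
    have h2 := hadd _ (hball h1) p hp
    simpa using h2
  -- nsmul of a is in P
  have hnsmul : ∀ n : ℕ, (n • a : Fin d → ℝ) ∈ P := by
    intro n
    have := hsmul (n : ℝ) (by positivity) a haP
    rwa [Nat.cast_smul_eq_nsmul] at this
  -- a ≠ 0
  have hane : a ≠ 0 := by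
    intro h0
    rw [h0] at ha
    rw [mem_interior_iff_mem_nhds, Metric.mem_nhds_iff] at ha
    obtain ⟨ε, hε, hball⟩ := ha
    set v : Fin d → ℝ := Pi.single ⟨0, hd⟩ (ε / 2) with hv
    have hnv : ‖v‖ < ε := by
      rw [hv, Pi.norm_single, Real.norm_eq_abs, abs_of_pos (by linarith)]
      linarith
    have hvP : v ∈ P := hball (by simpa [Metric.mem_ball, dist_eq_norm] using hnv)
    have hvP' : -v ∈ P := hball (by simpa [Metric.mem_ball, dist_eq_norm] using hnv)
    have : v ∈ P ∩ (-P) := ⟨hvP, by simpa [Set.mem_neg] using hvP'⟩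
    rw [hpointed] at this
    have hz : v ⟨0, hd⟩ = 0 := by rw [Set.mem_singleton_iff.mp this]; rfl
    rw [hv, Pi.single_eq_same] at hz
    linarith
  intro y hy
  rw [hLb] at hy
  obtain ⟨hy1, hy2⟩ := hy
  obtain ⟨ω, hω, hωy⟩ := hy1
  -- the predicate
  set Q : ℕ → Prop := fun n => y - k • a - n • a ∈ interior P with hQ
  have hQ0 : Q 0 := by
    have := hIadd ω hω (b - k • a) (hPsub hbk)
    have heq : y - k • a - (0 : ℕ) • a = ω + (b - k • a) := by
      rw [← hωy]; simp; abel
    show y - k • a - (0 : ℕ) • a ∈ interior P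
    rwa [heq]
  -- Q is not true for all n
  have hT : ∃ n, ¬ Q n := by
    by_contra hall
    push_neg at hall
    have hmem : ∀ n : ℕ, 1 ≤ n → ((n : ℝ)⁻¹ • (y - k • a) - a : Fin d → ℝ) ∈ P := by
      intro n hn
      have hnz : (n : ℝ) ≠ 0 := by positivity
      have h1 : ((n : ℝ)⁻¹ • (y - k • a - n • a) : Fin d → ℝ) ∈ P :=
        hsmul _ (by positivity) _ (hPsub (hall n))
      have h2 : ((n : ℝ)⁻¹ • (y - k • a - n • a) : Fin d → ℝ)
          = (n : ℝ)⁻¹ • (y - k • a) - a := by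
        rw [smul_sub, ← Nat.cast_smul_eq_nsmul ℝ n a, smul_smul, inv_mul_cancel₀ hnz, one_smul]
      rwa [h2] at h1
    have hlim : Filter.Tendsto (fun n : ℕ => ((n : ℝ)⁻¹ • (y - k • a) - a : Fin d → ℝ))
        Filter.atTop (nhds (-a)) := by
      have h0 : Filter.Tendsto (fun n : ℕ => (n : ℝ)⁻¹) Filter.atTop (nhds 0) :=
        tendsto_inv_atTop_nhds_zero_nat
      have := (h0.smul_const (y - k • a)).sub (tendsto_const_nhds (x := a))
      simpa using this
    have hmaP : -a ∈ P := hclosed.mem_of_tendsto hlim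
      (Filter.eventually_atTop.mpr ⟨1, fun n hn => hmem n hn⟩)
    have : a ∈ P ∩ (-P) := ⟨haP, by simpa [Set.mem_neg] using hmaP⟩
    rw [hpointed] at this
    exact hane (Set.mem_singleton_iff.mp this)
  -- let N be least with ¬ Q N
  classical
  set N := Nat.find hT with hN
  have hNspec : ¬ Q N := Nat.find_spec hT
  have hNpos : 1 ≤ N := by
    rcases Nat.eq_zero_or_pos N with h | h
    · exact absurd (h ▸ hQ0) hNspec
    · exact h
  set n := N - 1 with hn
  have hQn : Q n := by
    by_contra h
    have : N ≤ n := Nat.find_le h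
    omega
  have hnsucc : n + 1 = N := by omega
  set x := y - n • a with hx
  -- x ∈ Lk
  have hxLk : x ∈ Lk := by
    rw [hLk]
    constructor
    · exact ⟨y - k • a - n • a, hQn, by rw [hx]; abel⟩
    · rintro ⟨z, hz, hzeq⟩
      have hzval : z = y - k • a - (n + 1) • a := by
        have : z = x - (k + 1) • a := by
          have := hzeq; simp only at this
          rw [← this]; abel
        rw [this, hx, succ_nsmul, succ_nsmul]; abel
      rw [hzval, hnsucc] at hz
      exact hNspec hz
  have hyx : y = x + n • a := by rw [hx]; abel
  -- n is in the set for m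
  have hnset : x + n • a ∈ (fun y => y + b) '' interior P := by
    rw [← hyx]
    exact ⟨ω, hω, hωy⟩
  have hmle : m x ≤ n := (hm x hxLk).2 hnset
  -- no j < n is in the set
  have hnle : n ≤ m x := by
    by_contra h
    push_neg at h
    obtain ⟨ω', hω', hω'x⟩ := (hm x hxLk).1
    set i := n - (m x) - 1 with hi
    have hni : n = m x + 1 + i := by omega
    apply hy2
    refine ⟨ω' + i • a, hIadd ω' hω' _ (hnsmul i), ?_⟩
    simp only
    have hωx : ω' = x + (m x) • a - b := eq_sub_of_add_eq hω'x
    rw [hωx, hyx, hni, add_nsmul, add_nsmul, one_nsmul]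
    abel
  have hmeq : m x = n := le_antisymm hmle hnle
  exact ⟨⟨x, hxLk, n, hyx⟩, ⟨x, hxLk, by rw [hmeq]; exact hyx⟩⟩
end

section
/- Let d ≥ 1 and let P ⊆ ℝ^d be a closed convex cone which is pointed (P ∩ (−P) = {0}), with topological interior Ω, and let a ∈ Ω. Fix k ∈ ℕ and b ∈ Ω with b − k•a ∈ Ω. Set L_k := (Ω + k•a) \ (Ω + (k+1)•a) and for x ∈ L_k let m(x) be the least m ∈ ℕ with x + m•a ∈ Ω + b. Then for every n ∈ ℕ the set {x ∈ L_k : m(x) ≥ n} is relatively closed in L_k; consequently the function m : L_k → ℕ is Borel measurable, and the map χ : L_k → ℝ^d, χ(x) = x + m(x)•a, is Borel measurable. -/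
open Set Pointwise

/-! The orbit `x, x + a, x + 2a, …` enters the open set `Ω + b` for the first time at step
`m x`, so `m x ≥ n` says exactly that the first `n` points of the orbit avoid `Ω + b`:
`{m ≥ n}` is an intersection of `n` closed sets, and an `ℕ`-valued first-entrance time into
measurable sets is measurable. -/

section FirstEntrance

variable {X : Type*} {S : ℕ → Set X} {L : Set X} {m : X → ℕ}

theorem setOf_le_of_isLeast (hm : ∀ x ∈ L, IsLeast {j | x ∈ S j} (m x)) (n : ℕ) :
    {x ∈ L | n ≤ m x} = L ∩ ⋂ j < n, (S j)ᶜ := by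
  ext x
  simp only [mem_ofPred_eq, mem_inter_iff, mem_iInter, mem_compl_iff, and_congr_right_iff]
  intro hx
  constructor
  · exact fun hn j hj hxj => (hj.trans_le hn).not_ge ((hm x hx).2 hxj)
  · exact fun hS => not_lt.mp fun hlt => hS (m x) hlt (hm x hx).1

theorem isClosed_iInter_compl_of_isOpen [TopologicalSpace X] (hS : ∀ j, IsOpen (S j))
    (n : ℕ) : IsClosed (⋂ j < n, (S j)ᶜ) :=
  isClosed_biInter fun j _ => (hS j).isClosed_compl

theorem measurable_domRestrict_of_isLeast [MeasurableSpace X] (hS : ∀ j, MeasurableSet (S j))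
    (hm : ∀ x ∈ L, IsLeast {j | x ∈ S j} (m x)) : Measurable (L.domRestrict m) := by
  classical
  have hex : ∀ x : L, ∃ j, x.1 ∈ S j := fun x => ⟨m x, (hm x x.2).1⟩
  have hfind : L.domRestrict m = fun x => Nat.find (hex x) := by
    funext x
    exact (hm x x.2).unique ⟨Nat.find_spec (hex x), fun j hj => Nat.find_min' (hex x) hj⟩
  rw [hfind]
  exact measurable_find hex fun j => measurable_subtype_coe (hS j)

end FirstEntrance

theorem stmt_14_general (d : ℕ) (P : Set (Fin d → ℝ))
    (a : Fin d → ℝ) (b : Fin d → ℝ)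
    (Lk : Set (Fin d → ℝ))
    (m : (Fin d → ℝ) → ℕ)
    (hm : ∀ x ∈ Lk, IsLeast {j : ℕ | x + j • a ∈ (fun y => y + b) '' interior P} (m x)) :
    (∀ n : ℕ, ∃ F : Set (Fin d → ℝ), IsClosed F ∧ {x ∈ Lk | n ≤ m x} = Lk ∩ F) ∧
      Measurable (Lk.restrict m) ∧
      Measurable (Lk.restrict fun x => x + m x • a) := by
  set S : ℕ → Set (Fin d → ℝ) := fun j =>
    (· + j • a) ⁻¹' ((fun y => y + b) '' interior P)
  have hS : ∀ j, IsOpen (S j) := fun j =>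
    (isOpenMap_add_right b _ isOpen_interior).preimage (continuous_add_const _)
  have hm_meas : Measurable (Lk.domRestrict m) :=
    measurable_domRestrict_of_isLeast (fun j => (hS j).measurableSet) hm
  refine ⟨fun n => ⟨_, isClosed_iInter_compl_of_isOpen hS n, setOf_le_of_isLeast hm n⟩,
    hm_meas, ?_⟩
  exact measurable_subtype_coe.add ((measurable_from_top (f := fun n : ℕ => n • a)).comp hm_meas)

/-- For a pointed closed convex cone `P ⊆ ℝ^d` (`d ≥ 1`) with interior `Ω`,
`a ∈ Ω`, `k ∈ ℕ` and `b ∈ Ω` with `b - k•a ∈ Ω`: with `m x` the least `m ∈ ℕ`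
such that `x + m•a ∈ Ω + b`, the sets `{x ∈ L_k : m x ≥ n}` are relatively
closed in `L_k`, the function `m` is Borel measurable on `L_k`, and so is the
map `χ(x) = x + m(x)•a`. -/
theorem stmt_14 (d : ℕ) (hd : 1 ≤ d) (P : Set (Fin d → ℝ)) (hclosed : IsClosed P)
    (hadd : ∀ x ∈ P, ∀ y ∈ P, x + y ∈ P)
    (hsmul : ∀ (t : ℝ), 0 ≤ t → ∀ x ∈ P, t • x ∈ P)
    (hpointed : P ∩ (-P) = {0})
    (a : Fin d → ℝ) (ha : a ∈ interior P)
    (k : ℕ) (b : Fin d → ℝ) (hb : b ∈ interior P) (hbk : b - k • a ∈ interior P)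
    (Lk : Set (Fin d → ℝ))
    (hLk : Lk = ((fun x => x + k • a) '' interior P) \ ((fun x => x + (k + 1) • a) '' interior P))
    (m : (Fin d → ℝ) → ℕ)
    (hm : ∀ x ∈ Lk, IsLeast {j : ℕ | x + j • a ∈ (fun y => y + b) '' interior P} (m x)) :
    (∀ n : ℕ, ∃ F : Set (Fin d → ℝ), IsClosed F ∧ {x ∈ Lk | n ≤ m x} = Lk ∩ F) ∧
      Measurable (Lk.restrict m) ∧
      Measurable (Lk.restrict fun x => x + m x • a) :=
  stmt_14_general d P a b Lk m hm
end

section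
/- Let d ≥ 1 and let P ⊆ ℝ^d be a closed convex cone which is pointed (P ∩ (−P) = {0}), with topological interior Ω, and let a ∈ Ω. Fix k ∈ ℕ and b ∈ Ω with b − k•a ∈ Ω. Set L_k := (Ω + k•a) \ (Ω + (k+1)•a) and for x ∈ L_k let m(x) be the least m ∈ ℕ with x + m•a ∈ Ω + b, and let χ(x) = x + m(x)•a. Then χ is measure preserving: for every Borel set C ⊆ L_k one has λ(χ(C)) = λ(C), where λ is Lebesgue measure on ℝ^d. -/
open Set Pointwise MeasureTheory

/-- For a pointed closed convex cone `P ⊆ ℝ^d` (`d ≥ 1`) with interior `Ω`,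
`a ∈ Ω`, `k ∈ ℕ` and `b ∈ Ω` with `b - k•a ∈ Ω`: with `m x` the least `m ∈ ℕ`
such that `x + m•a ∈ Ω + b`, the map `χ(x) = x + m(x)•a` is measure
preserving on `L_k`, i.e. `λ(χ(C)) = λ(C)` for every Borel `C ⊆ L_k`. -/
theorem stmt_15 (d : ℕ) (hd : 1 ≤ d) (P : Set (Fin d → ℝ)) (hclosed : IsClosed P)
    (hadd : ∀ x ∈ P, ∀ y ∈ P, x + y ∈ P)
    (hsmul : ∀ (t : ℝ), 0 ≤ t → ∀ x ∈ P, t • x ∈ P)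
    (hpointed : P ∩ (-P) = {0})
    (a : Fin d → ℝ) (ha : a ∈ interior P)
    (k : ℕ) (b : Fin d → ℝ) (hb : b ∈ interior P) (hbk : b - k • a ∈ interior P)
    (Lk : Set (Fin d → ℝ))
    (hLk : Lk = ((fun x => x + k • a) '' interior P) \ ((fun x => x + (k + 1) • a) '' interior P))
    (m : (Fin d → ℝ) → ℕ)
    (hm : ∀ x ∈ Lk, IsLeast {j : ℕ | x + j • a ∈ (fun y => y + b) '' interior P} (m x)) :
    ∀ C : Set (Fin d → ℝ), C ⊆ Lk → MeasurableSet C →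
      volume ((fun x => x + m x • a) '' C) = volume C := by
  intro C hC hCmeas
  have haP : a ∈ P := interior_subset ha
  -- interior P is stable under adding elements of P
  have hΩP : ∀ p ∈ P, ∀ ω ∈ interior P, ω + p ∈ interior P := by
    intro p hp ω hω
    have hopen : IsOpen ((fun x => x + p) '' interior P) :=
      (isOpenMap_add_right p) _ isOpen_interior
    have hsub : (fun x => x + p) '' interior P ⊆ P := by
      rintro _ ⟨y, hy, rfl⟩
      exact hadd y (interior_subset hy) p hp
    exact interior_maximal hsub hopen ⟨ω, hω, rfl⟩
  have hnsmulP : ∀ n : ℕ, n • a ∈ P := by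
    intro n
    have := hsmul (n : ℝ) (by positivity) a haP
    simpa [← Nat.cast_smul_eq_nsmul ℝ] using this
  -- key injectivity-type fact: no two distinct shifts of points of Lk coincide
  have hkey : ∀ x ∈ Lk, ∀ y ∈ Lk, ∀ i j : ℕ, i < j → x + i • a ≠ y + j • a := by
    intro x hx y hy i j hij heq
    obtain ⟨s, rfl⟩ : ∃ s, j = i + (s + 1) := ⟨j - i - 1, by omega⟩
    have hxy : x = y + (s + 1) • a := by
      have : x + i • a = (y + (s + 1) • a) + i • a := by
        rw [heq, add_nsmul]; abel
      exact add_right_cancel this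
    rw [hLk] at hx hy
    obtain ⟨ω, hω, rfl⟩ := hy.1
    apply hx.2
    refine ⟨ω + s • a, hΩP _ (hnsmulP s) _ hω, ?_⟩
    rw [hxy]
    simp only [add_nsmul, one_nsmul]
    abel
  -- the "levels" of m
  set B : Set (Fin d → ℝ) := (fun y => y + b) '' interior P with hB
  have hBopen : IsOpen B := (isOpenMap_add_right b) _ isOpen_interior
  set D : ℕ → Set (Fin d → ℝ) := fun j => {x ∈ C | m x = j} with hD
  have hDchar : ∀ j, D j = C ∩ ((fun x => x + j • a) ⁻¹' B ∩
      ⋂ i ∈ Finset.range j, ((fun x => x + i • a) ⁻¹' B)ᶜ) := by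
    intro j
    ext x
    simp only [hD, mem_setOf_eq, mem_inter_iff, mem_preimage, Finset.mem_range, mem_iInter,
      mem_compl_iff]
    constructor
    · rintro ⟨hxC, rfl⟩
      have h := hm x (hC hxC)
      exact ⟨hxC, h.1, fun i hi hiB => absurd (h.2 hiB) (by omega)⟩
    · rintro ⟨hxC, hj, hlt⟩
      have h := hm x (hC hxC)
      refine ⟨hxC, ?_⟩
      have h1 : m x ≤ j := h.2 hj
      rcases lt_or_eq_of_le h1 with h2 | h2
      · exact absurd h.1 (hlt _ h2)
      · exact h2
  have hDmeas : ∀ j, MeasurableSet (D j) := by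
    intro j
    rw [hDchar j]
    refine hCmeas.inter (MeasurableSet.inter ?_ ?_)
    · exact hBopen.measurableSet.preimage (by fun_prop)
    · exact MeasurableSet.biInter (Finset.range j).countable_toSet fun i _ =>
        (hBopen.measurableSet.preimage (by fun_prop)).compl
  have hDsub : ∀ j, D j ⊆ C := fun j x hx => hx.1
  have hDunion : ⋃ j, D j = C := by
    ext x
    simp only [mem_iUnion, hD, mem_setOf_eq]
    exact ⟨fun ⟨j, hj, _⟩ => hj, fun hx => ⟨m x, hx, rfl⟩⟩
  have hDdisj : Pairwise (Function.onFun Disjoint D) := by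
    intro i j hij
    refine Set.disjoint_left.2 fun x hxi hxj => hij ?_
    rw [← hxi.2, ← hxj.2]
  -- the image decomposes as a disjoint union of translates
  set T : ℕ → Set (Fin d → ℝ) := fun j => (fun x => x + j • a) '' D j with hT
  have hTeq : (fun x => x + m x • a) '' C = ⋃ j, T j := by
    ext z
    simp only [mem_iUnion, hT, mem_image]
    constructor
    · rintro ⟨x, hx, rfl⟩
      exact ⟨m x, x, ⟨hx, rfl⟩, rfl⟩
    · rintro ⟨j, x, ⟨hx, rfl⟩, rfl⟩
      exact ⟨x, hx, rfl⟩
  have hTmeas : ∀ j, MeasurableSet (T j) := by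
    intro j
    rw [hT]
    simp only [image_add_right]
    exact (hDmeas j).preimage (by fun_prop)
  have hTdisj : Pairwise (Function.onFun Disjoint T) := by
    intro i j hij
    refine Set.disjoint_left.2 ?_
    rintro _ ⟨x, hx, rfl⟩ ⟨y, hy, heq⟩
    rcases hij.lt_or_gt with h | h
    · exact hkey x (hC (hDsub i hx)) y (hC (hDsub j hy)) i j h heq.symm
    · exact hkey y (hC (hDsub j hy)) x (hC (hDsub i hx)) j i h heq
  have hTvol : ∀ j, volume (T j) = volume (D j) := by
    intro j
    rw [hT]
    simp only [image_add_right]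
    exact measure_preimage_add_right volume _ _
  calc volume ((fun x => x + m x • a) '' C) = volume (⋃ j, T j) := by rw [hTeq]
    _ = ∑' j, volume (T j) := measure_iUnion hTdisj hTmeas
    _ = ∑' j, volume (D j) := by simp only [hTvol]
    _ = volume (⋃ j, D j) := (measure_iUnion hDdisj hDmeas).symm
    _ = volume C := by rw [hDunion]
end
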